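/- The function a₁(x) = (1/1152)·[ (145 + 249x² − 9x⁴)/(x²−1)³ − 7x(x²−6)/((x²−1)^{3/2}·ζ(x)^{3/2}) − 455/(4·ζ(x)³) ] tends to −249/28800 as x → 1 from the right, where ζ(x) = ( (3/4)·( x·√(x²−1) − arcosh x ) )^{2/3}. -/

import Mathlib

/-!
Put `s = √(x² - 1)`. Then `x √(x² - 1) - arcosh x = H(s)` with `H(s) = s √(1 + s²) - arsinh s`,
a smooth function with `H'(s) = 2 s² / √(1 + s²)`. Comparing derivatives with the binomial series of
`(1 + s²)^(-1/2)` gives `H(s) = s³ G(s²) + O(s¹¹)` for an explicit cubic `G` with `G(0) = 2/3`.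
Writing `H(s) = s³ r`, one has `1152 a₁(x) u³ r² = N(x, r)` with `u = x² - 1` and `N` quadratic in
`r`. Replacing `r` by `G(u)` and the odd factor `x` by its binomial truncation in `u` costs `o(u³)`,
and turns `N` into a polynomial in `u` whose first three Taylor coefficients vanish and whose
`u³`-coefficient is `-332/75`. Hence `a₁(x) → (-332/75) / (1152 · (2/3)²) = -249/28800`.
-/

open Real Filter

/-- The inverse hyperbolic cosine, `arcosh x = log (x + √(x² - 1))`. -/
noncomputable def arcosh (x : ℝ) : ℝ := Real.log (x + Real.sqrt (x ^ 2 - 1))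

/-- The variable `ζ(x) = ((3/4)(x√(x²-1) - arcosh x))^{2/3}` for `x ≥ 1`. -/
noncomputable def zeta (x : ℝ) : ℝ :=
  ((3 / 4) * (x * Real.sqrt (x ^ 2 - 1) - _root_.arcosh x)) ^ ((2 : ℝ) / 3)

/-- The coefficient function
`a₁(x) = (1/1152)·[(145+249x²-9x⁴)/(x²-1)³ - 7x(x²-6)/((x²-1)^{3/2}ζ^{3/2}) - 455/(4ζ³)]`. -/
noncomputable def a1 (x : ℝ) : ℝ :=
  (1 / 1152) *
    ((145 + 249 * x ^ 2 - 9 * x ^ 4) / (x ^ 2 - 1) ^ 3 -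
      7 * x * (x ^ 2 - 6) / ((x ^ 2 - 1) ^ ((3 : ℝ) / 2) * zeta x ^ ((3 : ℝ) / 2)) -
      455 / (4 * zeta x ^ 3))

open Topology

noncomputable section

/-- Degree-3 Taylor polynomials of `√(1 + u)` and `1 / √(1 + u)` at `u = 0`. -/
def sqrtTaylor (u : ℝ) : ℝ := 1 + u / 2 - u ^ 2 / 8 + u ^ 3 / 16

def invSqrtTaylor (u : ℝ) : ℝ := 1 - u / 2 + 3 * u ^ 2 / 8 - 5 * u ^ 3 / 16

lemma abs_sub_sqrtTaylor_le {r : ℝ} (hr : 1 ≤ r) :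
    |r - sqrtTaylor (r ^ 2 - 1)| ≤ (r ^ 2 - 1) ^ 4 := by
  have h : 0 ≤ r - 1 := by linarith
  rw [abs_le, sqrtTaylor]
  constructor <;>
    nlinarith [pow_nonneg h 4, pow_nonneg h 5, pow_nonneg h 6, pow_nonneg h 7, pow_nonneg h 8]

lemma abs_one_sub_mul_invSqrtTaylor_le {r : ℝ} (hr : 1 ≤ r) :
    |1 - r * invSqrtTaylor (r ^ 2 - 1)| ≤ 3 / 2 * (r ^ 2 - 1) ^ 4 := by
  have h : 0 ≤ r - 1 := by linarith
  rw [abs_le, invSqrtTaylor]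
  constructor <;>
    nlinarith [pow_nonneg h 4, pow_nonneg h 5, pow_nonneg h 6, pow_nonneg h 7, pow_nonneg h 8]

/-- For `s = sinh θ` this is `sinh θ cosh θ - θ`, twice the area of a hyperbolic segment. -/
def hyperbolicSegment (s : ℝ) : ℝ := s * √(1 + s ^ 2) - arsinh s

/-- `s³ · segmentPoly (s²)` is the degree-9 Taylor polynomial of `hyperbolicSegment` at `0`. -/
def segmentPoly (u : ℝ) : ℝ := 2 / 3 - u / 5 + 3 * u ^ 2 / 28 - 5 * u ^ 3 / 72

lemma hasDerivAt_hyperbolicSegment (s : ℝ) :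
    HasDerivAt hyperbolicSegment (2 * s ^ 2 / √(1 + s ^ 2)) s := by
  have hpos : 0 < 1 + s ^ 2 := by positivity
  have hroot : HasDerivAt (fun t => √(1 + t ^ 2)) (2 * s / (2 * √(1 + s ^ 2))) s := by
    simpa using ((hasDerivAt_pow 2 s).const_add 1).sqrt hpos.ne'
  have h : HasDerivAt (fun t => t * √(1 + t ^ 2) - arsinh t)
      (1 * √(1 + s ^ 2) + s * (2 * s / (2 * √(1 + s ^ 2))) - (√(1 + s ^ 2))⁻¹) s :=
    ((hasDerivAt_id' s).fun_mul hroot).fun_sub (hasDerivAt_arsinh s)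
  refine h.congr_deriv ?_
  have hsq := Real.sq_sqrt hpos.le
  have hne := (Real.sqrt_pos.2 hpos).ne'
  field_simp
  linear_combination hsq

lemma hasDerivAt_segmentTaylor (s : ℝ) :
    HasDerivAt (fun t => t ^ 3 * segmentPoly (t ^ 2)) (2 * s ^ 2 * invSqrtTaylor (s ^ 2)) s := by
  have h : HasDerivAt (fun t : ℝ => 2 / 3 * t ^ 3 - t ^ 5 / 5 + 3 * t ^ 7 / 28 - 5 * t ^ 9 / 72)
      (2 / 3 * (3 * s ^ 2) - 5 * s ^ 4 / 5 + 3 * (7 * s ^ 6) / 28 - 5 * (9 * s ^ 8) / 72) s := by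
    simpa using ((((hasDerivAt_pow 3 s).const_mul (2 / 3)).fun_sub
      ((hasDerivAt_pow 5 s).div_const 5)).fun_add
        (((hasDerivAt_pow 7 s).const_mul 3).div_const 28)).fun_sub
          (((hasDerivAt_pow 9 s).const_mul 5).div_const 72)
  convert h using 1
  · ext t
    simp only [segmentPoly]
    ring
  · simp only [invSqrtTaylor]
    ring

lemma abs_hyperbolicSegment_sub_le {s : ℝ} (hs : 0 ≤ s) :
    |hyperbolicSegment s - s ^ 3 * segmentPoly (s ^ 2)| ≤ 3 * s ^ 11 := by
  have hderiv (t : ℝ) : HasDerivAt (fun t => hyperbolicSegment t - t ^ 3 * segmentPoly (t ^ 2))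
      (2 * t ^ 2 / √(1 + t ^ 2) - 2 * t ^ 2 * invSqrtTaylor (t ^ 2)) t :=
    (hasDerivAt_hyperbolicSegment t).fun_sub (hasDerivAt_segmentTaylor t)
  have hbound : ∀ t ∈ Set.Ico 0 s,
      ‖2 * t ^ 2 / √(1 + t ^ 2) - 2 * t ^ 2 * invSqrtTaylor (t ^ 2)‖ ≤ 3 * s ^ 10 := by
    rintro t ⟨ht0, hts⟩
    set r := √(1 + t ^ 2)
    have hr : 1 ≤ r := Real.one_le_sqrt.2 (by nlinarith)
    have hr2 : r ^ 2 - 1 = t ^ 2 := by rw [Real.sq_sqrt (by positivity)]; ring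
    have hTaylor := abs_one_sub_mul_invSqrtTaylor_le hr
    rw [hr2] at hTaylor
    calc ‖2 * t ^ 2 / r - 2 * t ^ 2 * invSqrtTaylor (t ^ 2)‖
        = 2 * t ^ 2 * |1 - r * invSqrtTaylor (t ^ 2)| / r := by
          rw [Real.norm_eq_abs, show 2 * t ^ 2 / r - 2 * t ^ 2 * invSqrtTaylor (t ^ 2)
            = 2 * t ^ 2 * (1 - r * invSqrtTaylor (t ^ 2)) / r by field_simp]
          rw [abs_div, abs_mul, abs_of_nonneg (by positivity : 0 ≤ 2 * t ^ 2),
            abs_of_pos (by positivity : 0 < r)]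
      _ ≤ 2 * t ^ 2 * |1 - r * invSqrtTaylor (t ^ 2)| :=
          div_le_self (by positivity) hr
      _ ≤ 2 * t ^ 2 * (3 / 2 * (t ^ 2) ^ 4) := by gcongr
      _ = 3 * t ^ 10 := by ring
      _ ≤ 3 * s ^ 10 := by gcongr
  have h := norm_image_sub_le_of_norm_deriv_le_segment'
    (fun t _ => (hderiv t).hasDerivWithinAt) hbound s ⟨hs, le_rfl⟩
  calc |hyperbolicSegment s - s ^ 3 * segmentPoly (s ^ 2)|
      = ‖(hyperbolicSegment s - s ^ 3 * segmentPoly (s ^ 2))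
          - (hyperbolicSegment 0 - 0 ^ 3 * segmentPoly (0 ^ 2))‖ := by simp [hyperbolicSegment]
    _ ≤ 3 * s ^ 10 * (s - 0) := h
    _ = 3 * s ^ 11 := by ring

def segmentRatio (s : ℝ) : ℝ := hyperbolicSegment s / s ^ 3

lemma abs_segmentRatio_sub_le {s : ℝ} (hs : 0 < s) :
    |segmentRatio s - segmentPoly (s ^ 2)| ≤ 3 * s ^ 8 := by
  have h := abs_hyperbolicSegment_sub_le hs.le
  have hs3 : 0 < s ^ 3 := by positivity
  rw [segmentRatio, show hyperbolicSegment s / s ^ 3 - segmentPoly (s ^ 2)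
    = (hyperbolicSegment s - s ^ 3 * segmentPoly (s ^ 2)) / s ^ 3 by field_simp, abs_div,
    abs_of_pos hs3, div_le_iff₀ hs3]
  linarith

lemma tendsto_segmentRatio_sub_div :
    Tendsto (fun s => (segmentRatio s - segmentPoly (s ^ 2)) / s ^ 6) (𝓝[>] 0) (𝓝 0) := by
  have hbound : ∀ᶠ s in 𝓝[>] 0, ‖(segmentRatio s - segmentPoly (s ^ 2)) / s ^ 6‖ ≤ 3 * s ^ 2 := by
    filter_upwards [self_mem_nhdsWithin] with s (hs : 0 < s)
    have hs6 : 0 < s ^ 6 := by positivity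
    rw [Real.norm_eq_abs, abs_div, abs_of_pos hs6, div_le_iff₀ hs6]
    linarith [abs_segmentRatio_sub_le hs]
  refine squeeze_zero_norm' hbound ?_
  have : Continuous fun s : ℝ => 3 * s ^ 2 := by fun_prop
  simpa using this.continuousWithinAt.tendsto (s := Set.Ioi 0) (x := 0)

lemma tendsto_segmentRatio : Tendsto segmentRatio (𝓝[>] 0) (𝓝 (2 / 3)) := by
  have hpoly : Tendsto (fun s => segmentPoly (s ^ 2)) (𝓝[>] 0) (𝓝 (2 / 3)) := by
    have : Continuous fun s : ℝ => segmentPoly (s ^ 2) := by unfold segmentPoly; fun_prop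
    simpa [segmentPoly] using this.continuousWithinAt.tendsto (s := Set.Ioi 0) (x := 0)
  have hrem : Tendsto (fun s => s ^ 6 * ((segmentRatio s - segmentPoly (s ^ 2)) / s ^ 6))
      (𝓝[>] 0) (𝓝 0) := by
    simpa using ((continuous_pow 6).continuousWithinAt.tendsto (s := Set.Ioi (0 : ℝ)) (x := 0)).mul
      tendsto_segmentRatio_sub_div
  have h := hpoly.add hrem
  rw [add_zero] at h
  refine h.congr' ?_
  filter_upwards [self_mem_nhdsWithin] with s (hs : 0 < s)
  field_simp
  ring

lemma hyperbolicSegment_sqrt {x : ℝ} (hx : 1 ≤ x) :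
    hyperbolicSegment √(x ^ 2 - 1) = x * √(x ^ 2 - 1) - _root_.arcosh x := by
  have hx2 : √(1 + √(x ^ 2 - 1) ^ 2) = x := by
    rw [Real.sq_sqrt (by nlinarith), add_sub_cancel, Real.sqrt_sq (by linarith)]
  rw [hyperbolicSegment, hx2, arsinh, hx2, _root_.arcosh, add_comm, mul_comm]

lemma tendsto_sq_sub_one : Tendsto (fun x : ℝ => x ^ 2 - 1) (𝓝[>] 1) (𝓝[>] 0) := by
  refine tendsto_nhdsWithin_iff.2 ⟨?_, ?_⟩
  · have : Continuous fun x : ℝ => x ^ 2 - 1 := by fun_prop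
    simpa using this.continuousWithinAt.tendsto (s := Set.Ioi 1) (x := 1)
  · filter_upwards [self_mem_nhdsWithin] with x (hx : 1 < x)
    exact show 0 < x ^ 2 - 1 by nlinarith

lemma tendsto_sqrt_sq_sub_one : Tendsto (fun x => √(x ^ 2 - 1)) (𝓝[>] 1) (𝓝[>] 0) := by
  refine tendsto_nhdsWithin_iff.2 ⟨?_, ?_⟩
  · have : Continuous fun x : ℝ => √(x ^ 2 - 1) := by fun_prop
    simpa using this.continuousWithinAt.tendsto (s := Set.Ioi 1) (x := 1)
  · filter_upwards [self_mem_nhdsWithin] with x (hx : 1 < x)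
    exact Real.sqrt_pos.2 (by nlinarith)

lemma tendsto_sub_sqrtTaylor_div :
    Tendsto (fun x => (x - sqrtTaylor (x ^ 2 - 1)) / (x ^ 2 - 1) ^ 3) (𝓝[>] 1) (𝓝 0) := by
  have hbound : ∀ᶠ x in 𝓝[>] 1, ‖(x - sqrtTaylor (x ^ 2 - 1)) / (x ^ 2 - 1) ^ 3‖ ≤ x ^ 2 - 1 := by
    filter_upwards [self_mem_nhdsWithin] with x (hx : 1 < x)
    have hu : 0 < (x ^ 2 - 1) ^ 3 := pow_pos (by nlinarith) 3
    rw [Real.norm_eq_abs, abs_div, abs_of_pos hu, div_le_iff₀ hu]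
    linarith [abs_sub_sqrtTaylor_le hx.le]
  refine squeeze_zero_norm' hbound ?_
  have : Continuous fun x : ℝ => x ^ 2 - 1 := by fun_prop
  simpa using this.continuousWithinAt.tendsto (s := Set.Ioi 1) (x := 1)

def a1Numerator (x g : ℝ) : ℝ :=
  (145 + 249 * x ^ 2 - 9 * x ^ 4) * g ^ 2 - 28 / 3 * x * (x ^ 2 - 6) * g - 1820 / 9

lemma a1_eq {x : ℝ} (hx : 1 < x) (hr : 0 < segmentRatio √(x ^ 2 - 1)) :
    a1 x = a1Numerator x (segmentRatio √(x ^ 2 - 1)) / (x ^ 2 - 1) ^ 3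
      / (1152 * segmentRatio √(x ^ 2 - 1) ^ 2) := by
  set s := √(x ^ 2 - 1)
  set r := segmentRatio s
  have hs : 0 < s := Real.sqrt_pos.2 (by nlinarith)
  have hu : x ^ 2 - 1 = s ^ 2 := (Real.sq_sqrt (by nlinarith)).symm
  have hB : 0 ≤ 3 / 4 * (s ^ 3 * r) := by positivity
  have hH : hyperbolicSegment s = s ^ 3 * r := by
    simp only [r, segmentRatio]
    field_simp
  have hzeta : zeta x = (3 / 4 * (s ^ 3 * r)) ^ ((2 : ℝ) / 3) := by
    rw [zeta, ← hyperbolicSegment_sqrt hx.le, hH]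
  have hzeta32 : zeta x ^ ((3 : ℝ) / 2) = 3 / 4 * (s ^ 3 * r) := by
    rw [hzeta, ← Real.rpow_mul hB]
    norm_num
  have hzeta3 : zeta x ^ 3 = (3 / 4 * (s ^ 3 * r)) ^ 2 := by
    rw [hzeta, ← Real.rpow_natCast, ← Real.rpow_mul hB]
    norm_num
  have hu32 : (x ^ 2 - 1) ^ ((3 : ℝ) / 2) = s ^ 3 := by
    rw [hu, ← Real.rpow_natCast s 2, ← Real.rpow_mul hs.le]
    norm_num
  rw [a1, hzeta32, hzeta3, hu32, a1Numerator, hu]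
  field_simp
  ring

/-- `a1Numerator x (segmentPoly u)` with `x² = 1 + u`, except that the odd factor `x` is replaced
by `sqrtTaylor u`. -/
def a1NumeratorTaylor (u : ℝ) : ℝ :=
  (385 + 231 * u - 9 * u ^ 2) * segmentPoly u ^ 2 - 28 / 3 * sqrtTaylor u * (u - 5) * segmentPoly u
    - 1820 / 9

lemma tendsto_a1NumeratorTaylor_div :
    Tendsto (fun u => a1NumeratorTaylor u / u ^ 3) (𝓝[>] 0) (𝓝 (-332 / 75)) := by
  -- `a1NumeratorTaylor u = u³ · (this polynomial)`
  have hpoly : Continuous fun u : ℝ => -332 / 75 + u * (-532307 / 25200 + 701 / 120 * u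
      - 579209 / 254016 * u ^ 2 + 5195 / 4032 * u ^ 3 - 25 / 576 * u ^ 4) := by fun_prop
  have h := hpoly.continuousWithinAt.tendsto (s := Set.Ioi 0) (x := 0)
  simp only [zero_mul, add_zero] at h
  refine h.congr' ?_
  filter_upwards [self_mem_nhdsWithin] with u (hu : 0 < u)
  simp only [a1NumeratorTaylor, segmentPoly, sqrtTaylor]
  field_simp
  ring

lemma a1Numerator_eq_taylor_add (x g : ℝ) :
    a1Numerator x g = a1NumeratorTaylor (x ^ 2 - 1)
      + (g - segmentPoly (x ^ 2 - 1))
        * ((145 + 249 * x ^ 2 - 9 * x ^ 4) * (g + segmentPoly (x ^ 2 - 1))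
          - 28 / 3 * x * (x ^ 2 - 6))
      - (x - sqrtTaylor (x ^ 2 - 1)) * (28 / 3 * (x ^ 2 - 6) * segmentPoly (x ^ 2 - 1)) := by
  simp only [a1Numerator, a1NumeratorTaylor]
  ring

lemma tendsto_a1Numerator_div :
    Tendsto (fun x => a1Numerator x (segmentRatio √(x ^ 2 - 1)) / (x ^ 2 - 1) ^ 3) (𝓝[>] 1)
      (𝓝 (-332 / 75)) := by
  have hr := tendsto_segmentRatio.comp tendsto_sqrt_sq_sub_one
  have he₁ : Tendsto
      (fun x => (segmentRatio √(x ^ 2 - 1) - segmentPoly (x ^ 2 - 1)) / (x ^ 2 - 1) ^ 3)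
      (𝓝[>] 1) (𝓝 0) := by
    refine (tendsto_segmentRatio_sub_div.comp tendsto_sqrt_sq_sub_one).congr' ?_
    filter_upwards [self_mem_nhdsWithin] with x (hx : 1 < x)
    have hu : √(x ^ 2 - 1) ^ 2 = x ^ 2 - 1 := Real.sq_sqrt (by nlinarith)
    simp only [Function.comp, hu, show √(x ^ 2 - 1) ^ 6 = (√(x ^ 2 - 1) ^ 2) ^ 3 by ring]
  have hcont {f : ℝ → ℝ} (hf : Continuous f) : Tendsto f (𝓝[>] 1) (𝓝 (f 1)) :=
    hf.continuousWithinAt.tendsto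
  have hM₁ := ((hcont (f := fun x => 145 + 249 * x ^ 2 - 9 * x ^ 4) (by fun_prop)).mul
    (hr.add (hcont (f := fun x => segmentPoly (x ^ 2 - 1)) (by unfold segmentPoly; fun_prop)))).sub
      (hcont (f := fun x => 28 / 3 * x * (x ^ 2 - 6)) (by fun_prop))
  have hM₂ := hcont (f := fun x => 28 / 3 * (x ^ 2 - 6) * segmentPoly (x ^ 2 - 1))
    (by unfold segmentPoly; fun_prop)
  have h := ((tendsto_a1NumeratorTaylor_div.comp tendsto_sq_sub_one).add (he₁.mul hM₁)).sub
    (tendsto_sub_sqrtTaylor_div.mul hM₂)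
  simp only [zero_mul, add_zero, sub_zero] at h
  refine h.congr' ?_
  filter_upwards [self_mem_nhdsWithin] with x (hx : 1 < x)
  have hu : (x ^ 2 - 1) ^ 3 ≠ 0 := pow_ne_zero 3 (by nlinarith)
  rw [a1Numerator_eq_taylor_add]
  simp only [Function.comp]
  field_simp

end

theorem tendsto_a1_one :
    Tendsto a1 (nhdsWithin 1 (Set.Ioi 1)) (nhds (-249 / 28800)) := by
  have hr := tendsto_segmentRatio.comp tendsto_sqrt_sq_sub_one
  have hpos : ∀ᶠ x in 𝓝[>] 1, 0 < segmentRatio √(x ^ 2 - 1) :=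
    hr.eventually (lt_mem_nhds (by norm_num))
  have h := tendsto_a1Numerator_div.div ((hr.pow 2).const_mul 1152) (by norm_num)
  rw [show (-249 / 28800 : ℝ) = -332 / 75 / (1152 * (2 / 3) ^ 2) by norm_num]
  refine h.congr' ?_
  filter_upwards [self_mem_nhdsWithin, hpos] with x (hx : 1 < x) hrx
  exact (a1_eq hx hrx).symm
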